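/- arXiv:2009.11855 — 4 statements merged into one kernel-verified Lean document; each statement's English description precedes it below -/
import Mathlib

section
/- Suppose there exists a nonnegative finite Borel measure w₀ on 𝕋 that is feasible. Then the solution set of (BPC) is exactly the set of nonnegative feasible measures: a feasible signed measure w is a solution of (BPC) if and only if w is nonnegative. -/
open MeasureTheory Complex Real Matrix
open scoped Real ComplexOrder

noncomputable section

instance : Fact (0 < 2 * π) := ⟨by positivity⟩

/-- The circle `𝕋 = ℝ/2πℤ`. -/
abbrev Circle2pi := AddCircle (2 * π)

/-- The `k`-th Fourier coefficient of a finite signed Borel measure `w` on `𝕋`: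
`ŵ[k] = ∫ e^{-ikt} dw⁺(t) - ∫ e^{-ikt} dw⁻(t)`, where `w = w⁺ - w⁻` is the Jordan
decomposition. -/
noncomputable def sFourierCoeff (w : MeasureTheory.SignedMeasure Circle2pi) (k : ℤ) : ℂ :=
  (∫ t, fourier (-k) t ∂w.toJordanDecomposition.posPart)
    - ∫ t, fourier (-k) t ∂w.toJordanDecomposition.negPart

/-- The total variation norm `‖w‖ = w⁺(𝕋) + w⁻(𝕋)`. -/
noncomputable def tvNorm (w : MeasureTheory.SignedMeasure Circle2pi) : ℝ :=
  (w.totalVariation Set.univ).toReal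

/-- `w` is feasible for the data `y` : `ŵ[k] = y k` for all `|k| ≤ K_c`. -/
def Feasible (Kc : ℕ) (y : ℤ → ℂ) (w : MeasureTheory.SignedMeasure Circle2pi) : Prop :=
  ∀ k : ℤ, |k| ≤ (Kc : ℤ) → sFourierCoeff w k = y k

/-- `w` is a solution of the problem (BPC): it is feasible and minimizes the total
variation norm among feasible measures. -/
def IsBPCSolution (Kc : ℕ) (y : ℤ → ℂ) (w : MeasureTheory.SignedMeasure Circle2pi) : Prop :=
  Feasible Kc y w ∧ ∀ v : MeasureTheory.SignedMeasure Circle2pi, Feasible Kc y v →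
    tvNorm w ≤ tvNorm v

/-
The zeroth Fourier coefficient of a measure is its total mass, so every feasible `v` has
`v(𝕋) = y₀`. For any signed measure `v(𝕋) = v⁺(𝕋) - v⁻(𝕋) ≤ v⁺(𝕋) + v⁻(𝕋) = ‖v‖`, with equality
exactly when `v⁻ = 0`, i.e. when `v ≥ 0`. Hence `y₀` is a lower bound for `‖·‖` on the feasible
set, attained by the nonnegative feasible `w₀`, and the feasible measures attaining it are
precisely the nonnegative ones.
-/

namespace MeasureTheory.SignedMeasure

variable {α : Type*} [MeasurableSpace α] (s : SignedMeasure α)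

theorem zero_le_iff_negPart_eq_zero : 0 ≤ s ↔ s.toJordanDecomposition.negPart = 0 := by
  constructor
  · intro hs
    obtain ⟨i, hi, -, hneg, -, hnegPart⟩ := s.toJordanDecomposition_spec
    have hreal : s.toJordanDecomposition.negPart.real Set.univ ≤ 0 := by
      rw [hnegPart, toMeasureOfLEZero_real_apply _ hneg hi.compl MeasurableSet.univ,
        neg_nonpos]
      exact hs _ (hi.compl.inter MeasurableSet.univ)
    rw [← Measure.measure_univ_eq_zero, ← measureReal_eq_zero_iff]
    exact le_antisymm hreal measureReal_nonneg
  · intro hneg i hi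
    rw [_root_.zero_apply, s.apply_eq_posPart_real_sub_negPart_real hi, hneg,
      measureReal_zero_apply, sub_zero]
    exact measureReal_nonneg

theorem apply_univ_le_totalVariation_real : s Set.univ ≤ s.totalVariation.real Set.univ :=
  (le_abs_self _).trans (s.norm_le_totalVariation _)

theorem totalVariation_real_univ_eq_apply_univ_iff :
    s.totalVariation.real Set.univ = s Set.univ ↔ 0 ≤ s := by
  rw [zero_le_iff_negPart_eq_zero, ← Measure.measure_univ_eq_zero, ← measureReal_eq_zero_iff,
    totalVariation, measureReal_add_apply, s.apply_eq_posPart_real_sub_negPart_real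
      MeasurableSet.univ]
  have := measureReal_nonneg (μ := s.toJordanDecomposition.negPart) (s := Set.univ)
  constructor <;> intro h <;> linarith

end MeasureTheory.SignedMeasure

open MeasureTheory.SignedMeasure

theorem tvNorm_eq_totalVariation_real (w : SignedMeasure Circle2pi) :
    tvNorm w = w.totalVariation.real Set.univ :=
  rfl

theorem sFourierCoeff_zero (w : SignedMeasure Circle2pi) : sFourierCoeff w 0 = w Set.univ := by
  simp [sFourierCoeff, w.apply_eq_posPart_real_sub_negPart_real MeasurableSet.univ]

theorem Feasible.apply_univ_eq {Kc : ℕ} {y : ℤ → ℂ} {v w : SignedMeasure Circle2pi}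
    (hv : Feasible Kc y v) (hw : Feasible Kc y w) : v Set.univ = w Set.univ := by
  have h0 : |(0 : ℤ)| ≤ Kc := by simp
  exact_mod_cast (sFourierCoeff_zero v).symm.trans ((hv 0 h0).trans
    ((hw 0 h0).symm.trans (sFourierCoeff_zero w)))

theorem solution_iff_nonneg_of_exists_nonneg_feasible_general (Kc : ℕ) (y : ℤ → ℂ)
    (w₀ : MeasureTheory.SignedMeasure Circle2pi) (hpos : 0 ≤ w₀)
    (hfeas : Feasible Kc y w₀) :
    ∀ w : MeasureTheory.SignedMeasure Circle2pi, Feasible Kc y w →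
      (IsBPCSolution Kc y w ↔ 0 ≤ w) := by
  intro w hw
  have htv₀ : tvNorm w₀ = w Set.univ := by
    rw [tvNorm_eq_totalVariation_real, (totalVariation_real_univ_eq_apply_univ_iff w₀).2 hpos,
      hfeas.apply_univ_eq hw]
  constructor
  · rintro ⟨-, hmin⟩
    refine (totalVariation_real_univ_eq_apply_univ_iff w).1 (le_antisymm ?_ ?_)
    · exact htv₀ ▸ hmin w₀ hfeas
    · exact apply_univ_le_totalVariation_real w
  · intro hw_nonneg
    refine ⟨hw, fun v hv => ?_⟩
    calc tvNorm w = w Set.univ := (totalVariation_real_univ_eq_apply_univ_iff w).2 hw_nonneg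
      _ = v Set.univ := hw.apply_univ_eq hv
      _ ≤ tvNorm v := apply_univ_le_totalVariation_real v

/-- If there exists a nonnegative feasible measure, then the solution set of (BPC) is
exactly the set of nonnegative feasible measures. -/
theorem solution_iff_nonneg_of_exists_nonneg_feasible (Kc : ℕ) (hKc : 1 ≤ Kc) (y : ℤ → ℂ)
    (hsym : ∀ k : ℤ, |k| ≤ (Kc : ℤ) → y (-k) = starRingEnd ℂ (y k))
    (w₀ : MeasureTheory.SignedMeasure Circle2pi) (hpos : 0 ≤ w₀)
    (hfeas : Feasible Kc y w₀) :
    ∀ w : MeasureTheory.SignedMeasure Circle2pi, Feasible Kc y w →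
      (IsBPCSolution Kc y w ↔ 0 ≤ w) :=
  solution_iff_nonneg_of_exists_nonneg_feasible_general Kc y w₀ hpos hfeas
end
end

section
/- If the Hermitian Toeplitz matrix T_y ∈ ℂ^{(K_c+1)×(K_c+1)} is positive semidefinite, then there exists a nonnegative finite Borel measure μ on 𝕋 with μ̂[k] = y_k for all 0 ≤ k ≤ K_c. -/
/-!
A positive semidefinite matrix is a Gram matrix: `T_y = (⟪f i, f j⟫)` for vectors `f 0, …, f K_c`.
Since `⟪f i, f j⟫ = y (j - i)` depends only on `j - i`, the shift `f j ↦ f (j + 1)` preserves inner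
products and extends to a linear isometry `U`, giving `y k = ⟪f 0, U ^ k (f 0)⟫`. An isometry of a
finite-dimensional complex space is diagonalizable with unimodular eigenvalues and orthogonal
eigenspaces, so `⟪f 0, U ^ k (f 0)⟫ = ∑ z ^ k ‖g z‖²`, where `g z` is the component of `f 0` in the
`z`-eigenspace: these are the Fourier coefficients of the measure with mass `‖g z‖²` at the point of
the circle corresponding to `z`.
-/

open MeasureTheory Complex Real Matrix
open scoped Real ComplexOrder InnerProductSpace ComplexConjugate NNReal

noncomputable section

/-- The Hermitian Toeplitz matrix `T_y` with entries `(T_y)_{i,j} = y_{j-i}`. -/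
def Ty (Kc : ℕ) (y : ℤ → ℂ) : Matrix (Fin (Kc + 1)) (Fin (Kc + 1)) ℂ :=
  Matrix.of fun i j => y ((j : ℤ) - (i : ℤ))

theorem Matrix.PosSemidef.exists_eq_gram {𝕜 n : Type*} [RCLike 𝕜] [Finite n]
    {A : Matrix n n 𝕜} (hA : A.PosSemidef) :
    ∃ (m : ℕ) (v : n → EuclideanSpace 𝕜 (Fin m)), A = gram 𝕜 v := by
  obtain ⟨m, u, rfl⟩ := posSemidef_iff_eq_sum_vecMulVec.mp hA
  refine ⟨m, fun a ↦ WithLp.toLp 2 fun i ↦ star (u i a), ?_⟩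
  ext a b
  simp [gram_apply, PiLp.inner_apply, Matrix.sum_apply, vecMulVec_apply, mul_comm]

theorem Fin.iterate_apply_zero_eq_of_map_castSucc {α : Type*} {n : ℕ} (T : α → α)
    (f : Fin (n + 1) → α) (hf : ∀ j : Fin n, T (f j.castSucc) = f j.succ) (i : Fin (n + 1)) :
    T^[i] (f 0) = f i := by
  induction i using Fin.induction with
  | zero => rfl
  | succ j ih => rw [Fin.val_succ, Function.iterate_succ_apply', ← Fin.val_castSucc, ih, hf]

namespace AddCircle

variable {T : ℝ} [hT : Fact (0 < T)]

theorem exists_fourier_neg_eq_pow {z : ℂ} (hz : ‖z‖ = 1) :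
    ∃ θ : AddCircle T, ∀ n : ℤ, fourier (-n) θ = z ^ n := by
  let c : Circle := ⟨z, mem_sphere_zero_iff_norm.2 hz⟩
  obtain ⟨θ, hθ⟩ := (homeomorphCircle hT.out.ne').surjective c⁻¹
  rw [homeomorphCircle_apply] at hθ
  refine ⟨θ, fun n ↦ ?_⟩
  rw [fourier_apply, toCircle_zsmul, hθ, _root_.inv_zpow', neg_neg, Circle.coe_zpow]

theorem exists_isFiniteMeasure_integral_fourier_eq_sum (s : Finset ℂ) (hs : ∀ z ∈ s, ‖z‖ = 1)
    (w : ℂ → ℝ≥0) :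
    ∃ μ : Measure (AddCircle T), IsFiniteMeasure μ ∧
      ∀ n : ℤ, ∫ t, fourier (-n) t ∂μ = ∑ z ∈ s, (w z : ℂ) * z ^ n := by
  choose! θ hθ using fun z (hz : z ∈ s) ↦ exists_fourier_neg_eq_pow (T := T) (hs z hz)
  refine ⟨∑ z ∈ s, w z • Measure.dirac (θ z), inferInstance, fun n ↦ ?_⟩
  rw [integral_finsetSum_measure fun z _ ↦
    (map_continuous (fourier (-n))).integrable_of_hasCompactSupport (.of_compactSpace _)]
  refine Finset.sum_congr rfl fun z hz ↦ ?_
  rw [integral_smul_nnreal_measure, integral_dirac, hθ z hz, NNReal.smul_def, Complex.real_smul]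

end AddCircle

namespace LinearIsometry

section RCLike

variable {𝕜 E : Type*} [RCLike 𝕜] [NormedAddCommGroup E] [InnerProductSpace 𝕜 E]

theorem exists_apply_eq_of_inner_eq [FiniteDimensional 𝕜 E] {ι : Type*} [Fintype ι]
    {v w : ι → E} (h : ∀ i j, ⟪v i, v j⟫_𝕜 = ⟪w i, w j⟫_𝕜) :
    ∃ U : E →ₗᵢ[𝕜] E, ∀ i, U (v i) = w i := by
  classical
  let φ := Fintype.linearCombination 𝕜 v
  let ψ := Fintype.linearCombination 𝕜 w
  have hφψ (c d : ι → 𝕜) : ⟪φ c, φ d⟫_𝕜 = ⟪ψ c, ψ d⟫_𝕜 := by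
    simp [φ, ψ, Fintype.linearCombination_apply, sum_inner, inner_sum, inner_smul_left,
      inner_smul_right, h]
  have hker : LinearMap.ker φ ≤ LinearMap.ker ψ := fun c hc ↦ by
    rw [LinearMap.mem_ker] at hc ⊢
    rw [← inner_self_eq_zero (𝕜 := 𝕜), ← hφψ, hc, inner_zero_left]
  let ξ : LinearMap.range φ →ₗ[𝕜] E :=
    (LinearMap.ker φ).liftQ ψ hker ∘ₗ (LinearMap.quotKerEquivRange φ).symm.toLinearMap
  have hξ (c : ι → 𝕜) : ξ ⟨φ c, LinearMap.mem_range_self φ c⟩ = ψ c := by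
    simp [ξ, LinearMap.quotKerEquivRange_symm_apply_image]
  let V : LinearMap.range φ →ₗᵢ[𝕜] E := ξ.isometryOfInner <| by
    rintro ⟨-, c, rfl⟩ ⟨-, d, rfl⟩
    rw [hξ, hξ, Submodule.coe_inner, ← hφψ]
  refine ⟨V.extend, fun i ↦ ?_⟩
  have hv : φ (Pi.single i 1) = v i := by simp [φ]
  have hw : ψ (Pi.single i 1) = w i := by simp [ψ]
  rw [← hv, ← hw, ← hξ]
  exact V.extend_apply ⟨φ (Pi.single i 1), LinearMap.mem_range_self φ _⟩

variable (U : E →ₗᵢ[𝕜] E)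

theorem orthogonal_mem_invtSubmodule [FiniteDimensional 𝕜 E] {p : Submodule 𝕜 E}
    (hp : p ∈ Module.End.invtSubmodule U.toLinearMap) :
    pᗮ ∈ Module.End.invtSubmodule U.toLinearMap := by
  intro y hy
  rw [Submodule.mem_comap, Submodule.mem_orthogonal]
  intro x hx
  have hsurj : Function.Surjective (U.toLinearMap.restrict hp) :=
    LinearMap.injective_iff_surjective.mp fun a b hab ↦ Subtype.ext (U.injective congr($hab.1))
  obtain ⟨x', hx'⟩ := hsurj ⟨x, hx⟩
  have hUx' : U x' = x := congr($hx'.1)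
  rw [← hUx', coe_toLinearMap, U.inner_map_map]
  exact hy x' x'.2

theorem isSemisimple [FiniteDimensional 𝕜 E] : Module.End.IsSemisimple U.toLinearMap :=
  Module.End.isSemisimple_iff.mpr fun p hp ↦
    ⟨pᗮ, U.orthogonal_mem_invtSubmodule hp, Submodule.isCompl_orthogonal p⟩

theorem norm_eq_one_of_apply_eq_smul {a : 𝕜} {v : E} (hv : U v = a • v) (hv0 : v ≠ 0) :
    ‖a‖ = 1 := by
  have h := U.norm_map v
  rwa [hv, norm_smul, mul_eq_right₀ (norm_ne_zero_iff.mpr hv0)] at h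

theorem inner_eq_zero_of_apply_eq_smul {a b : 𝕜} {v w : E} (hv : U v = a • v)
    (hw : U w = b • w) (hab : a ≠ b) : ⟪v, w⟫_𝕜 = 0 := by
  by_contra h
  have hv0 : v ≠ 0 := by rintro rfl; simp at h
  have hab' : conj a * b = 1 := by
    have := U.inner_map_map v w
    rwa [hv, hw, inner_smul_left, inner_smul_right, ← mul_assoc, mul_eq_right₀ h] at this
  have haa : conj a * a = 1 := by
    rw [RCLike.conj_mul, U.norm_eq_one_of_apply_eq_smul hv hv0]; simp
  exact hab (mul_left_cancel₀ (left_ne_zero_of_mul_eq_one haa) (haa.trans hab'.symm))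

theorem pow_apply_of_apply_eq_smul {a : 𝕜} {v : E} (hv : U v = a • v) (m : ℕ) :
    (U ^ m) v = a ^ m • v := by
  induction m with
  | zero => simp
  | succ m ih =>
    rw [coe_pow, Function.iterate_succ_apply', ← coe_pow, ih, map_smul, hv, smul_smul, pow_succ]

end RCLike

variable {E : Type*} [NormedAddCommGroup E] [InnerProductSpace ℂ E] [FiniteDimensional ℂ E]
  (U : E →ₗᵢ[ℂ] E)

theorem exists_inner_pow_eq_sum (x : E) :
    ∃ (s : Finset ℂ) (w : ℂ → ℝ≥0), (∀ z ∈ s, ‖z‖ = 1) ∧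
      ∀ m : ℕ, ⟪x, (U ^ m) x⟫_ℂ = ∑ z ∈ s, (w z : ℂ) * z ^ m := by
  have hx : x ∈ ⨆ z : ℂ, Module.End.eigenspace U.toLinearMap z := by
    rw [U.isSemisimple.iSup_eigenspace_eq_top]; trivial
  obtain ⟨g, hg, rfl⟩ := (Submodule.mem_iSup_iff_exists_finsupp _ _).mp hx
  have hgU (z : ℂ) : U (g z) = z • g z := Module.End.mem_eigenspace_iff.mp (hg z)
  refine ⟨g.support, fun z ↦ ‖g z‖₊ ^ 2,
    fun z hz ↦ U.norm_eq_one_of_apply_eq_smul (hgU z) (Finsupp.mem_support_iff.mp hz), fun m ↦ ?_⟩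
  simp only [Finsupp.sum, map_sum, U.pow_apply_of_apply_eq_smul (hgU _), inner_sum, sum_inner,
    inner_smul_right]
  refine Finset.sum_congr rfl fun b hb ↦ ?_
  rw [Finset.sum_eq_single_of_mem b hb
    fun a _ hab ↦ U.inner_eq_zero_of_apply_eq_smul (hgU a) (hgU b) hab, inner_self_eq_norm_sq_to_K]
  simp [mul_comm]

theorem exists_isFiniteMeasure_integral_fourier_eq_inner_pow {T : ℝ} [Fact (0 < T)] (x : E) :
    ∃ μ : Measure (AddCircle T), IsFiniteMeasure μ ∧
      ∀ m : ℕ, ∫ t, fourier (-m) t ∂μ = ⟪x, (U ^ m) x⟫_ℂ := by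
  obtain ⟨s, w, hs, hsum⟩ := U.exists_inner_pow_eq_sum x
  obtain ⟨μ, hμ, hμs⟩ := AddCircle.exists_isFiniteMeasure_integral_fourier_eq_sum (T := T) s hs w
  exact ⟨μ, hμ, fun m ↦ by rw [hμs, hsum]; simp⟩

end LinearIsometry

theorem exists_nonneg_measure_of_Ty_posSemidef_general (Kc : ℕ) (y : ℤ → ℂ)
    (hpsd : (Ty Kc y).PosSemidef) :
    ∃ μ : MeasureTheory.Measure Circle2pi, MeasureTheory.IsFiniteMeasure μ ∧
      ∀ k : ℤ, 0 ≤ k → k ≤ (Kc : ℤ) → ∫ t, fourier (-k) t ∂μ = y k := by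
  obtain ⟨r, f, hf⟩ := hpsd.exists_eq_gram
  have hgram (i j : Fin (Kc + 1)) : ⟪f i, f j⟫_ℂ = y (j - i) := by
    rw [← gram_apply, ← hf]; rfl
  obtain ⟨U, hU⟩ := LinearIsometry.exists_apply_eq_of_inner_eq (𝕜 := ℂ)
    (v := f ∘ Fin.castSucc) (w := f ∘ Fin.succ) fun i j ↦ by simp [hgram]
  obtain ⟨μ, hμ, hμU⟩ := U.exists_isFiniteMeasure_integral_fourier_eq_inner_pow (T := 2 * π) (f 0)
  refine ⟨μ, hμ, fun k hk0 hkK ↦ ?_⟩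
  lift k to ℕ using hk0
  have hshift := Fin.iterate_apply_zero_eq_of_map_castSucc U f hU ⟨k, by omega⟩
  rw [hμU, LinearIsometry.coe_pow, hshift, hgram]
  simp

/-- If the Hermitian Toeplitz matrix `T_y` is positive semidefinite, then there exists a
nonnegative finite Borel measure `μ` on `𝕋` with `μ̂[k] = y k` for all `0 ≤ k ≤ K_c`. -/
theorem exists_nonneg_measure_of_Ty_posSemidef (Kc : ℕ) (hKc : 1 ≤ Kc) (y : ℤ → ℂ)
    (hsym : ∀ k : ℤ, |k| ≤ (Kc : ℤ) → y (-k) = starRingEnd ℂ (y k))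
    (hpsd : (Ty Kc y).PosSemidef) :
    ∃ μ : MeasureTheory.Measure Circle2pi, MeasureTheory.IsFiniteMeasure μ ∧
      ∀ k : ℤ, 0 ≤ k → k ≤ (Kc : ℤ) → ∫ t, fourier (-k) t ∂μ = y k :=
  exists_nonneg_measure_of_Ty_posSemidef_general Kc y hpsd
end
end

section
/- If the Hermitian Toeplitz matrix T_y is positive definite (or negative definite), then no solution of (BPC) is a sum of fewer than K_c+1 Dirac masses: there is no solution of the form Σ_{i=1}^N a_i δ_{x_i} with N ≤ K_c, nonzero real a_i and pairwise distinct x_i ∈ 𝕋. -/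
/-!
If `w = ∑ aₘ δ_{xₘ}` is feasible, then `y_k = ∑ aₘ e^{-ikxₘ}` for `|k| ≤ K_c`, so
`T_y = Vᴴ diag(a) V` with `V` the `N × (K_c + 1)` matrix `(e^{-ijxₘ})`. Hence `rank T_y ≤ N ≤ K_c`,
whereas a definite matrix of size `K_c + 1` is invertible.
-/

open MeasureTheory Complex Real Matrix
open scoped Real ComplexOrder

noncomputable section

/-- The Dirac measure at `x ∈ 𝕋`, viewed as a signed measure. -/
noncomputable def diracSM (x : Circle2pi) : MeasureTheory.SignedMeasure Circle2pi :=
  (MeasureTheory.Measure.dirac x).toSignedMeasure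

namespace MeasureTheory.SignedMeasure

variable {α : Type*} [MeasurableSpace α]

theorem posPart_add_eq_add_negPart {w : SignedMeasure α} {μ ν : Measure α}
    [IsFiniteMeasure μ] [IsFiniteMeasure ν] (h : w = μ.toSignedMeasure - ν.toSignedMeasure) :
    w.toJordanDecomposition.posPart + ν = μ + w.toJordanDecomposition.negPart := by
  have hw : w.toJordanDecomposition.posPart.toSignedMeasure
      - w.toJordanDecomposition.negPart.toSignedMeasure = μ.toSignedMeasure - ν.toSignedMeasure :=
    w.toSignedMeasure_toJordanDecomposition.trans h
  rw [sub_eq_sub_iff_add_eq_add] at hw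
  rw [← Measure.toSignedMeasure_eq_toSignedMeasure_iff, Measure.toSignedMeasure_add,
    Measure.toSignedMeasure_add, hw]

end MeasureTheory.SignedMeasure

lemma integrable_fourier (μ : Measure Circle2pi) [IsFiniteMeasure μ] (k : ℤ) :
    Integrable (fourier k ·) μ :=
  (fourier k).continuous.integrable_of_hasCompactSupport (HasCompactSupport.of_compactSpace _)

theorem sFourierCoeff_eq_of_eq_sub {w : SignedMeasure Circle2pi} {μ ν : Measure Circle2pi}
    [IsFiniteMeasure μ] [IsFiniteMeasure ν] (h : w = μ.toSignedMeasure - ν.toSignedMeasure)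
    (k : ℤ) : sFourierCoeff w k = (∫ t, fourier (-k) t ∂μ) - ∫ t, fourier (-k) t ∂ν := by
  have hint := congrArg (∫ t, fourier (-k) t ∂·) (SignedMeasure.posPart_add_eq_add_negPart h)
  simp only [integral_add_measure (integrable_fourier _ _) (integrable_fourier _ _)] at hint
  rw [sFourierCoeff]
  linear_combination hint

theorem sFourierCoeff_add (v w : SignedMeasure Circle2pi) (k : ℤ) :
    sFourierCoeff (v + w) k = sFourierCoeff v k + sFourierCoeff w k := by
  set jv := v.toJordanDecomposition
  set jw := w.toJordanDecomposition
  have h : v + w = (jv.posPart + jw.posPart).toSignedMeasure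
      - (jv.negPart + jw.negPart).toSignedMeasure := by
    conv_lhs => rw [← v.toSignedMeasure_toJordanDecomposition,
      ← w.toSignedMeasure_toJordanDecomposition]
    simp only [JordanDecomposition.toSignedMeasure, Measure.toSignedMeasure_add]
    abel
  rw [sFourierCoeff_eq_of_eq_sub h, sFourierCoeff, sFourierCoeff,
    integral_add_measure (integrable_fourier _ _) (integrable_fourier _ _),
    integral_add_measure (integrable_fourier _ _) (integrable_fourier _ _)]
  ring

theorem sFourierCoeff_neg (w : SignedMeasure Circle2pi) (k : ℤ) :
    sFourierCoeff (-w) k = -sFourierCoeff w k := by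
  have h : -w = w.toJordanDecomposition.negPart.toSignedMeasure
      - w.toJordanDecomposition.posPart.toSignedMeasure := by
    conv_lhs => rw [← w.toSignedMeasure_toJordanDecomposition]
    rw [JordanDecomposition.toSignedMeasure, neg_sub]
  rw [sFourierCoeff_eq_of_eq_sub h, sFourierCoeff, neg_sub]

theorem sFourierCoeff_nnreal_smul (r : NNReal) (w : SignedMeasure Circle2pi) (k : ℤ) :
    sFourierCoeff (r • w) k = r * sFourierCoeff w k := by
  have h : r • w = (r • w.toJordanDecomposition.posPart).toSignedMeasure
      - (r • w.toJordanDecomposition.negPart).toSignedMeasure := by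
    conv_lhs => rw [← w.toSignedMeasure_toJordanDecomposition]
    rw [JordanDecomposition.toSignedMeasure, Measure.toSignedMeasure_smul,
      Measure.toSignedMeasure_smul, smul_sub]
  rw [sFourierCoeff_eq_of_eq_sub h, sFourierCoeff, integral_smul_nnreal_measure,
    integral_smul_nnreal_measure, mul_sub]
  simp [NNReal.smul_def, Complex.real_smul]

theorem sFourierCoeff_smul (c : ℝ) (w : SignedMeasure Circle2pi) (k : ℤ) :
    sFourierCoeff (c • w) k = c * sFourierCoeff w k := by
  rcases le_total 0 c with hc | hc
  · lift c to NNReal using hc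
    exact sFourierCoeff_nnreal_smul c w k
  · have h : c • w = -((-c).toNNReal • w) := by
      rw [NNReal.smul_def, Real.coe_toNNReal _ (neg_nonneg.2 hc), neg_smul c w, neg_neg]
    rw [h, sFourierCoeff_neg, sFourierCoeff_nnreal_smul, Real.coe_toNNReal _ (neg_nonneg.2 hc)]
    push_cast
    ring

theorem sFourierCoeff_diracSM (x : Circle2pi) (k : ℤ) :
    sFourierCoeff (diracSM x) k = fourier (-k) x := by
  have h : diracSM x
      = (Measure.dirac x).toSignedMeasure - (0 : Measure Circle2pi).toSignedMeasure := by
    rw [Measure.toSignedMeasure_zero, sub_zero, diracSM]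
  rw [sFourierCoeff_eq_of_eq_sub h, integral_dirac, integral_zero_measure, sub_zero]

theorem sFourierCoeff_sum_smul_diracSM {N : ℕ} (x : Fin N → Circle2pi) (a : Fin N → ℝ) (k : ℤ) :
    sFourierCoeff (∑ i, a i • diracSM (x i)) k = ∑ i, (a i : ℂ) * fourier (-k) (x i) := by
  refine (map_sum (AddMonoidHom.mk' (sFourierCoeff · k) fun v w => sFourierCoeff_add v w k)
    _ _).trans ?_
  simp [sFourierCoeff_smul, sFourierCoeff_diracSM]

theorem Matrix.not_posDef_conjTranspose_mul_mul {K m n : Type*} [Field K] [PartialOrder K]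
    [StarRing K] [Fintype m] [Fintype n] (A : Matrix m n K) (D : Matrix m m K)
    (h : Fintype.card m < Fintype.card n) : ¬ (Aᴴ * D * A).PosDef := by
  classical
  intro hpos
  have hrank : (Aᴴ * D * A).rank ≤ Fintype.card m :=
    (rank_mul_le_right _ _).trans A.rank_le_card_height
  rw [rank_of_isUnit _ hpos.isUnit] at hrank
  exact h.not_ge hrank

def fourierVandermonde {N : ℕ} (Kc : ℕ) (x : Fin N → Circle2pi) :
    Matrix (Fin N) (Fin (Kc + 1)) ℂ :=
  Matrix.of fun m j => fourier (-(j : ℤ)) (x m)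

theorem Ty_eq_conjTranspose_mul_diagonal_mul {N Kc : ℕ} {y : ℤ → ℂ} {x : Fin N → Circle2pi}
    {a : Fin N → ℂ} (hy : ∀ k : ℤ, |k| ≤ (Kc : ℤ) → y k = ∑ m, a m * fourier (-k) (x m)) :
    Ty Kc y = (fourierVandermonde Kc x)ᴴ * diagonal a * fourierVandermonde Kc x := by
  ext i j
  have hij : |(j : ℤ) - i| ≤ Kc := abs_le.2 ⟨by omega, by omega⟩
  rw [Ty, of_apply, hy _ hij, mul_apply]
  refine Finset.sum_congr rfl fun m _ => ?_
  rw [mul_diagonal, conjTranspose_apply, fourierVandermonde, of_apply, of_apply, star_def,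
    ← fourier_neg, neg_neg, neg_sub, sub_eq_add_neg, fourier_add]
  ring

theorem no_sparse_solution_of_Ty_definite_general (Kc : ℕ) (y : ℤ → ℂ)
    (hdef : (Ty Kc y).PosDef ∨ (-(Ty Kc y)).PosDef) :
    ¬ ∃ (w : MeasureTheory.SignedMeasure Circle2pi) (N : ℕ) (x : Fin N → Circle2pi)
        (a : Fin N → ℝ),
        IsBPCSolution Kc y w ∧ N ≤ Kc ∧ Function.Injective x ∧ (∀ i, a i ≠ 0) ∧
        w = ∑ i, a i • diracSM (x i) := by
  rintro ⟨_, N, x, a, ⟨hfeas, -⟩, hN, -, -, rfl⟩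
  have hTy : Ty Kc y = (fourierVandermonde Kc x)ᴴ * diagonal (fun m => (a m : ℂ))
      * fourierVandermonde Kc x :=
    Ty_eq_conjTranspose_mul_diagonal_mul fun k hk => by
      rw [← hfeas k hk, sFourierCoeff_sum_smul_diracSM]
  have hcard : Fintype.card (Fin N) < Fintype.card (Fin (Kc + 1)) := by
    simp only [Fintype.card_fin]; omega
  rcases hdef with hpos | hneg
  · exact Matrix.not_posDef_conjTranspose_mul_mul _ _ hcard (hTy ▸ hpos)
  · rw [hTy, ← Matrix.neg_mul, ← Matrix.mul_neg] at hneg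
    exact Matrix.not_posDef_conjTranspose_mul_mul _ _ hcard hneg

/-- If `T_y` is positive definite or negative definite, then no solution of (BPC) is a
sum of fewer than `K_c + 1` Dirac masses. -/
theorem no_sparse_solution_of_Ty_definite (Kc : ℕ) (hKc : 1 ≤ Kc) (y : ℤ → ℂ)
    (hsym : ∀ k : ℤ, |k| ≤ (Kc : ℤ) → y (-k) = starRingEnd ℂ (y k))
    (hdef : (Ty Kc y).PosDef ∨ (-(Ty Kc y)).PosDef) :
    ¬ ∃ (w : MeasureTheory.SignedMeasure Circle2pi) (N : ℕ) (x : Fin N → Circle2pi)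
        (a : Fin N → ℝ),
        IsBPCSolution Kc y w ∧ N ≤ Kc ∧ Function.Injective x ∧ (∀ i, a i ≠ 0) ∧
        w = ∑ i, a i • diracSM (x i) :=
  no_sparse_solution_of_Ty_definite_general Kc y hdef
end
end

section
/- Let K_c ≥ 1 and let w₀ = Σ_{k=0}^{2K_c−1} (−1)^k δ_{2πk/(2K_c)}, a signed measure on 𝕋 consisting of 2K_c alternating-sign Dirac masses at the points 2πk/(2K_c). Then w₀ is a solution of (BPC) for the data y = (ŵ₀[k])_{|k| ≤ K_c}: every finite signed Borel measure w on 𝕋 with ŵ[k] = ŵ₀[k] for all |k| ≤ K_c satisfies ‖w‖ ≥ ‖w₀‖ = 2K_c. -/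
open MeasureTheory Complex Real Matrix
open scoped Real ComplexOrder

noncomputable section

/-- The alternating-sign measure `w₀ = ∑_{k=0}^{2K_c - 1} (-1)^k δ_{2πk/(2K_c)}`. -/
noncomputable def altDiracMeasure (Kc : ℕ) : MeasureTheory.SignedMeasure Circle2pi :=
  ∑ k ∈ Finset.range (2 * Kc),
    ((-1 : ℝ) ^ k) • diracSM (((2 * π * k / (2 * Kc) : ℝ) : Circle2pi))

/-!
The character `t ↦ e^{i K_c t}` is a dual certificate. It has modulus one, so
`|ŵ[K_c]| ≤ ‖w‖` for every signed measure `w`; and it takes the value `(-1)^k` at the `k`-th atom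
`πk/K_c` of `w₀`, where `w₀` has sign `(-1)^k`, so `ŵ₀[K_c] = 2K_c`. Hence every `w` with the
data of `w₀` has `‖w‖ ≥ 2K_c`, while the triangle inequality for the total variation gives
`‖w₀‖ ≤ 2K_c`.
-/

section SignedMeasureIntegral

open VectorMeasure

variable {X G : Type*} [MeasurableSpace X] [NormedAddCommGroup G]

theorem Continuous.integrable_signedMeasure [TopologicalSpace X] [CompactSpace X]
    [OpensMeasurableSpace X] {f : X → G} (hf : Continuous f) (s : SignedMeasure X) :
    s.Integrable f := by
  rw [VectorMeasure.Integrable, ← s.totalVariation_eq_variation]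
  exact hf.integrable_of_hasCompactSupport (.of_compactSpace f)

variable [NormedSpace ℝ G]

theorem MeasureTheory.SignedMeasure.integral_eq_integral_posPart_sub_integral_negPart
    (s : SignedMeasure X) {f : X → G} (hf : Integrable f s.totalVariation) :
    ∫ᵛ x, f x ∂<•s = ∫ x, f x ∂s.toJordanDecomposition.posPart
      - ∫ x, f x ∂s.toJordanDecomposition.negPart := by
  obtain ⟨hpos, hneg⟩ := integrable_add_measure.mp hf
  conv_lhs => rw [← s.toSignedMeasure_toJordanDecomposition]
  rw [JordanDecomposition.toSignedMeasure, integral_sub_vectorMeasure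
    (by rwa [VectorMeasure.Integrable, Measure.variation_toSignedMeasure])
    (by rwa [VectorMeasure.Integrable, Measure.variation_toSignedMeasure]),
    integral_toSignedMeasure, integral_toSignedMeasure]

theorem MeasureTheory.SignedMeasure.norm_integral_le (s : SignedMeasure X) {f : X → G} {C : ℝ}
    (hC : 0 ≤ C) (hf : ∀ x, ‖f x‖ ≤ C) :
    ‖∫ᵛ x, f x ∂<•s‖ ≤ C * (s.totalVariation Set.univ).toReal := by
  have : IsFiniteMeasure s.variation := s.totalVariation_eq_variation ▸ inferInstance
  have hB : ‖(ContinuousLinearMap.lsmul ℝ ℝ : ℝ →L[ℝ] G →L[ℝ] G).flip‖ ≤ 1 := by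
    rw [ContinuousLinearMap.opNorm_flip]
    exact ContinuousLinearMap.opNorm_lsmul_le
  calc ‖∫ᵛ x, f x ∂<•s‖
      ≤ C * ‖(ContinuousLinearMap.lsmul ℝ ℝ : ℝ →L[ℝ] G →L[ℝ] G).flip‖
          * s.variation.real Set.univ :=
        VectorMeasure.norm_integral_le_of_norm_le_const (ae_of_all _ hf)
    _ ≤ C * 1 * s.variation.real Set.univ := by gcongr
    _ = C * (s.totalVariation Set.univ).toReal := by
        rw [mul_one, s.totalVariation_eq_variation, measureReal_def]

end SignedMeasureIntegral

theorem sFourierCoeff_eq_integral (w : SignedMeasure Circle2pi) (k : ℤ) :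
    sFourierCoeff w k = ∫ᵛ t, fourier (-k) t ∂<•w :=
  (w.integral_eq_integral_posPart_sub_integral_negPart
    ((fourier (-k)).continuous.integrable_of_hasCompactSupport (.of_compactSpace _))).symm

theorem norm_sFourierCoeff_le_tvNorm (w : SignedMeasure Circle2pi) (k : ℤ) :
    ‖sFourierCoeff w k‖ ≤ tvNorm w := by
  rw [sFourierCoeff_eq_integral, tvNorm, ← one_mul (w.totalVariation _).toReal]
  exact w.norm_integral_le zero_le_one fun t => (Circle.norm_coe _).le

theorem fourier_neg_coe_two_pi_mul_div {Kc : ℕ} (hKc : Kc ≠ 0) (k : ℕ) :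
    fourier (-(Kc : ℤ)) ((2 * π * k / (2 * Kc) : ℝ) : Circle2pi) = (-1 : ℂ) ^ k := by
  rw [fourier_coe_apply, show 2 * π * I * ↑(-(Kc : ℤ)) * ↑(2 * π * k / (2 * Kc)) / ↑(2 * π)
      = k * -(π * I) by push_cast; field_simp, Complex.exp_nat_mul, Complex.exp_neg, exp_pi_mul_I]
  norm_num

theorem sFourierCoeff_altDiracMeasure {Kc : ℕ} (hKc : Kc ≠ 0) :
    sFourierCoeff (altDiracMeasure Kc) Kc = 2 * Kc := by
  rw [sFourierCoeff_eq_integral, altDiracMeasure, VectorMeasure.integral_finsetSum_vectorMeasure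
    fun _ _ => (fourier _).continuous.integrable_signedMeasure _]
  simp only [VectorMeasure.integral_smul_vectorMeasure, diracSM,
    VectorMeasure.integral_toSignedMeasure, integral_dirac,
    fourier_neg_coe_two_pi_mul_div hKc, real_smul, ofReal_pow, ofReal_neg, ofReal_one,
    ← mul_pow, mul_neg_one, neg_neg, one_pow, Finset.sum_const, Finset.card_range, nsmul_one]
  push_cast
  ring

theorem tvNorm_altDiracMeasure_le (Kc : ℕ) : tvNorm (altDiracMeasure Kc) ≤ 2 * Kc := by
  have hvar : (altDiracMeasure Kc).variation Set.univ ≤ 2 * Kc :=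
    calc (altDiracMeasure Kc).variation Set.univ
        ≤ ∑ k ∈ Finset.range (2 * Kc),
            (((-1 : ℝ) ^ k) • diracSM ((2 * π * k / (2 * Kc) : ℝ) : Circle2pi)).variation
              Set.univ := by
          grw [altDiracMeasure, VectorMeasure.variation_finsetSum_le, Measure.finsetSum_apply]
      _ = 2 * Kc := by
          simp [VectorMeasure.variation_smul, diracSM]
  rw [tvNorm, SignedMeasure.totalVariation_eq_variation]
  exact ENNReal.toReal_le_of_le_ofReal (by positivity) (by exact_mod_cast hvar)

theorem two_mul_le_tvNorm_of_sFourierCoeff_eq {Kc : ℕ} (hKc : Kc ≠ 0)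
    {w : SignedMeasure Circle2pi}
    (hw : sFourierCoeff w Kc = sFourierCoeff (altDiracMeasure Kc) Kc) :
    2 * Kc ≤ tvNorm w :=
  calc (2 * Kc : ℝ) = ‖sFourierCoeff (altDiracMeasure Kc) Kc‖ := by
        rw [sFourierCoeff_altDiracMeasure hKc]; norm_cast
    _ = ‖sFourierCoeff w Kc‖ := by rw [hw]
    _ ≤ tvNorm w := norm_sFourierCoeff_le_tvNorm w Kc

/-- The alternating measure `w₀` of `2 K_c` Dirac masses is a solution of (BPC) for the
data `y = (ŵ₀[k])_{|k| ≤ K_c}`: any signed measure with the same Fourier coefficients up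
to order `K_c` has total variation norm at least `‖w₀‖ = 2 K_c`. -/
theorem altDiracMeasure_is_BPC_solution (Kc : ℕ) (hKc : 1 ≤ Kc) :
    tvNorm (altDiracMeasure Kc) = 2 * Kc ∧
    ∀ w : MeasureTheory.SignedMeasure Circle2pi,
      (∀ k : ℤ, |k| ≤ (Kc : ℤ) →
        sFourierCoeff w k = sFourierCoeff (altDiracMeasure Kc) k) →
      tvNorm (altDiracMeasure Kc) ≤ tvNorm w := by
  have hKc₀ : Kc ≠ 0 := by omega
  have hupper := tvNorm_altDiracMeasure_le Kc
  exact ⟨hupper.antisymm (two_mul_le_tvNorm_of_sFourierCoeff_eq hKc₀ rfl),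
    fun w hw => hupper.trans (two_mul_le_tvNorm_of_sFourierCoeff_eq hKc₀ (hw Kc (by simp)))⟩
end
end
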